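/- For positive integers m, n and nonnegative integers a_1, ..., a_m with m ≥ 2, the quantity S_n(a_1,…,a_m) := ([a_1+⋯+a_m+1]_q!/([n]_q [a_1]_q!⋯[a_m]_q!)) ∑_{h=0}^{n-1} q^h ∏_{i=1}^m [h choose a_i]_q satisfies the recurrence S_n(a_1,…,a_m) = ∑_{k=0}^{a_m} [a_1+⋯+a_m+1 choose a_m−k]_q [a_{m-1}+k choose a_m]_q [a_{m-1}+k choose a_{m-1}]_q q^{k(a_{m-1}−a_m+k)} S_n(a_1,…,a_{m-2}, a_{m-1}+k). -/

import Mathlib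

open Polynomial Finset

set_option maxHeartbeats 2000000
set_option synthInstance.maxHeartbeats 400000

/-- The q-integer `[n]_q = 1 + q + ⋯ + q^{n-1}` as a polynomial in `ℤ[q]`. -/
noncomputable def qint (n : ℕ) : Polynomial ℤ := ∑ i ∈ Finset.range n, X ^ i

/-- The q-factorial `[n]_q! = [n]_q [n-1]_q ⋯ [1]_q`. -/
noncomputable def qfact : ℕ → Polynomial ℤ
  | 0 => 1
  | n + 1 => qint (n + 1) * qfact n

/-- The Gaussian (q-)binomial coefficient `[n choose k]_q` as a polynomial in `ℤ[q]`,
defined by the q-Pascal recurrence; it equals `∏_{i=1}^k (1-q^{n-i+1})/(1-q^i)` for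
`0 ≤ k ≤ n` and `0` otherwise. -/
noncomputable def qbinom : ℕ → ℕ → Polynomial ℤ
  | _, 0 => 1
  | 0, _ + 1 => 0
  | n + 1, k + 1 => qbinom n k + X ^ (k + 1) * qbinom n (k + 1)

/-- `S_n(a_1,…,a_m) = ([a_1+⋯+a_m+1]_q!/([n]_q [a_1]_q!⋯[a_m]_q!)) ∑_{h<n} q^h ∏ [h choose a_i]_q`,
as an element of the field of rational functions in `q` over `ℤ`. -/
noncomputable def Sq (n : ℕ) {m : ℕ} (a : Fin m → ℕ) : FractionRing (Polynomial ℤ) :=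
  algebraMap (Polynomial ℤ) _ (qfact (∑ i, a i + 1)) /
      (algebraMap (Polynomial ℤ) _ (qint n) * ∏ i, algebraMap (Polynomial ℤ) _ (qfact (a i))) *
    ∑ h ∈ Finset.range n, algebraMap (Polynomial ℤ) _ (X ^ h * ∏ i, qbinom h (a i))

lemma qbinom_zero_right (n : ℕ) : qbinom n 0 = 1 := by
  cases n <;> rfl

lemma qbinom_succ_succ (n k : ℕ) :
    qbinom (n + 1) (k + 1) = qbinom n k + X ^ (k + 1) * qbinom n (k + 1) := rfl

lemma qbinom_eq_zero : ∀ {n k : ℕ}, n < k → qbinom n k = 0 := by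
  intro n
  induction n with
  | zero => intro k hk; match k, hk with | k + 1, _ => rfl
  | succ n ih =>
    intro k hk
    match k, hk with
    | k + 1, hk =>
      rw [qbinom_succ_succ, ih (by omega), ih (by omega)]
      ring

lemma qbinom_self : ∀ n : ℕ, qbinom n n = 1 := by
  intro n
  induction n with
  | zero => rfl
  | succ n ih => rw [qbinom_succ_succ, ih, qbinom_eq_zero (by omega)]; ring

lemma qint_succ (n : ℕ) : qint (n + 1) = qint n + X ^ n := by
  rw [qint, Finset.sum_range_succ, ← qint]

lemma qint_add (a b : ℕ) : qint (a + b) = qint a + X ^ a * qint b := by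
  induction b with
  | zero => simp [qint]
  | succ b ih =>
    rw [show a + (b + 1) = (a + b) + 1 from rfl, qint_succ, ih, qint_succ, pow_add]
    ring

lemma qfact_succ (n : ℕ) : qfact (n + 1) = qint (n + 1) * qfact n := rfl

lemma poly_fact : ∀ n k : ℕ, k ≤ n → qbinom n k * (qfact k * qfact (n - k)) = qfact n := by
  intro n
  induction n with
  | zero => intro k hk; interval_cases k; simp [qbinom_zero_right, qfact]
  | succ n ih =>
    intro k hk
    match k with
    | 0 => simp [qbinom_zero_right, qfact]
    | k + 1 =>
      rcases Nat.lt_or_ge k n with h | h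
      · obtain ⟨d, rfl⟩ : ∃ d, n = k + 1 + d := ⟨n - (k+1), by omega⟩
        have h1 : k + 1 + d + 1 - (k + 1) = d + 1 := by omega
        have h2 : k + 1 + d - k = d + 1 := by omega
        have h3 : k + 1 + d - (k + 1) = d := by omega
        have ihk := ih k (by omega)
        rw [h2] at ihk
        have ihk1 := ih (k + 1) (by omega)
        rw [h3] at ihk1
        have hq : qint (k + 1 + d + 1) = qint (k + 1) + X ^ (k + 1) * qint (d + 1) := by
          rw [show k + 1 + d + 1 = k + 1 + (d + 1) from by omega]; exact qint_add _ _
        rw [qbinom_succ_succ, h1, add_mul, show qfact (k + 1 + d + 1) = qint (k + 1 + d + 1) * qfact (k + 1 + d) from rfl,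
          show qfact (d + 1) = qint (d + 1) * qfact d from rfl,
          show qfact (k + 1) = qint (k + 1) * qfact k from rfl]
        rw [show qfact (d + 1) = qint (d + 1) * qfact d from rfl] at ihk
        rw [show qfact (k + 1) = qint (k + 1) * qfact k from rfl] at ihk1
        linear_combination qint (k + 1) * ihk + X ^ (k + 1) * qint (d + 1) * ihk1 - qfact (k + 1 + d) * hq
      · have hk' : k = n := by omega
        subst hk'
        rw [qbinom_succ_succ, qbinom_self, qbinom_eq_zero (by omega)]
        simp [qfact]

lemma qbinom_pascal2 : ∀ n k : ℕ, qbinom (n + 1) (k + 1) = qbinom n (k + 1) + X ^ (n - k) * qbinom n k := by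
  intro n
  induction n with
  | zero =>
    intro k
    match k with
    | 0 =>
      rw [qbinom_succ_succ, qbinom_zero_right, qbinom_eq_zero (show (0:ℕ) < 0 + 1 from by omega)]
      norm_num
    | k + 1 =>
      rw [qbinom_succ_succ, qbinom_eq_zero (show (0:ℕ) < k + 1 + 1 from by omega),
        qbinom_eq_zero (show (0:ℕ) < k + 1 from by omega)]
      ring
  | succ n ih =>
    intro k
    match k with
    | 0 =>
      have A := qbinom_succ_succ (n + 1) 0
      have B := qbinom_succ_succ n 0
      have C := ih 0
      rw [qbinom_zero_right] at A B C
      rw [Nat.sub_zero] at C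
      rw [qbinom_zero_right, Nat.sub_zero]
      linear_combination A - B + X * C
    | k + 1 =>
      have A := qbinom_succ_succ (n + 1) (k + 1)
      have B := ih k
      have C := ih (k + 1)
      have D := qbinom_succ_succ n k
      have E := qbinom_succ_succ n (k + 1)
      rcases le_or_gt (k + 1) n with h | h
      · obtain ⟨d, rfl⟩ : ∃ d, n = k + 1 + d := ⟨n - (k + 1), by omega⟩
        rw [show k + 1 + d - k = d + 1 from by omega] at B
        rw [show k + 1 + d - (k + 1) = d from by omega] at C
        rw [show k + 1 + d + 1 - (k + 1) = d + 1 from by omega]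
        linear_combination A + B + X ^ (k + 2) * C - E - X ^ (d + 1) * D
      · have hb : qbinom n (k + 1) = 0 := qbinom_eq_zero (by omega)
        have hc : qbinom n (k + 1 + 1) = 0 := qbinom_eq_zero (by omega)
        rw [show n - (k + 1) = 0 from by omega] at C
        rw [show n + 1 - (k + 1) = 0 from by omega]
        linear_combination A + (X ^ (k + 1 + 1) - 1) * (C + hb + hc)

-- nonzero lemmas
lemma qint_ne_zero {n : ℕ} (hn : 1 ≤ n) : qint n ≠ 0 := by
  intro h
  have := congrArg (Polynomial.eval 1) h
  rw [qint] at this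
  simp [Polynomial.eval_finset_sum] at this
  omega

lemma qfact_ne_zero (n : ℕ) : qfact n ≠ 0 := by
  induction n with
  | zero => exact one_ne_zero
  | succ n ih => exact mul_ne_zero (qint_ne_zero (by omega)) ih

noncomputable abbrev φq : Polynomial ℤ →+* FractionRing (Polynomial ℤ) :=
  algebraMap (Polynomial ℤ) (FractionRing (Polynomial ℤ))

lemma φq_inj : Function.Injective φq :=
  IsFractionRing.injective (Polynomial ℤ) (FractionRing (Polynomial ℤ))

lemma φq_ne_zero {p : Polynomial ℤ} (hp : p ≠ 0) : φq p ≠ 0 := by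
  simpa [map_ne_zero_iff φq φq_inj] using hp

lemma φq_qfact_ne_zero (n : ℕ) : φq (qfact n) ≠ 0 := φq_ne_zero (qfact_ne_zero n)

lemma fact_div {n k : ℕ} (hk : k ≤ n) :
    φq (qbinom n k) = φq (qfact n) / (φq (qfact k) * φq (qfact (n - k))) := by
  rw [eq_div_iff (mul_ne_zero (φq_qfact_ne_zero k) (φq_qfact_ne_zero (n - k))), ← map_mul, ← map_mul]
  exact congrArg φq (poly_fact n k hk)

lemma qbinom_symm {n k : ℕ} (hk : k ≤ n) : qbinom n (n - k) = qbinom n k := by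
  apply φq_inj
  rw [fact_div hk, fact_div (show n - k ≤ n from by omega), show n - (n - k) = k from by omega]
  ring

lemma trinomial {h s b : ℕ} (hb : b ≤ s) :
    qbinom h s * qbinom s b = qbinom h b * qbinom (h - b) (s - b) := by
  rcases Nat.lt_or_ge h s with hs | hs
  · rw [qbinom_eq_zero hs]
    rcases Nat.lt_or_ge h b with hb' | hb'
    · rw [qbinom_eq_zero hb']; ring
    · rw [qbinom_eq_zero (show h - b < s - b from by omega)]; ring
  · apply φq_inj
    have hbh : b ≤ h := le_trans hb hs
    rw [map_mul, map_mul, fact_div hs, fact_div hb, fact_div hbh,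
      fact_div (show s - b ≤ h - b from by omega),
      show h - b - (s - b) = h - s from by omega]
    rw [div_mul_div_comm, div_mul_div_comm, div_eq_div_iff (by
        exact mul_ne_zero (mul_ne_zero (φq_qfact_ne_zero _) (φq_qfact_ne_zero _))
          (mul_ne_zero (φq_qfact_ne_zero _) (φq_qfact_ne_zero _))) (by
        exact mul_ne_zero (mul_ne_zero (φq_qfact_ne_zero _) (φq_qfact_ne_zero _))
          (mul_ne_zero (φq_qfact_ne_zero _) (φq_qfact_ne_zero _)))]
    ring

lemma vandermonde : ∀ (n m k : ℕ), qbinom (m + n) k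
    = ∑ j ∈ Finset.range (k + 1), qbinom m (k - j) * qbinom n j * X ^ (j * (m + j - k)) := by
  intro n
  induction n with
  | zero =>
    intro m k
    rw [Finset.sum_eq_single 0]
    · simp [qbinom_zero_right]
    · intro j _ hj0
      rw [qbinom_eq_zero (show 0 < j from Nat.pos_of_ne_zero hj0)]
      ring
    · intro h; exact absurd (Finset.mem_range.2 (by omega)) h
  | succ n ih =>
    intro m k
    match k with
    | 0 => simp [qbinom_zero_right]
    | k + 1 =>
      have hL1 : qbinom (m + n) (k + 1)
          = (∑ j ∈ Finset.range (k + 1),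
              qbinom m (k - j) * qbinom n (j + 1) * X ^ ((j + 1) * (m + j - k)))
            + qbinom m (k + 1) := by
        rw [ih m (k + 1), Finset.sum_range_succ']
        congr 1
        · apply Finset.sum_congr rfl
          intro j _
          rw [show k + 1 - (j + 1) = k - j from by omega,
            show m + (j + 1) - (k + 1) = m + j - k from by omega]
        · simp [qbinom_zero_right]
      have hL2 : X ^ (m + n - k) * ∑ j ∈ Finset.range (k + 1),
            qbinom m (k - j) * qbinom n j * X ^ (j * (m + j - k))
          = ∑ j ∈ Finset.range (k + 1),
              qbinom m (k - j) * qbinom n j * (X ^ (n - j) * X ^ ((j + 1) * (m + j - k))) := by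
        rw [Finset.mul_sum]
        apply Finset.sum_congr rfl
        intro j _
        by_cases h1 : k ≤ m + j ∧ j ≤ n
        · obtain ⟨t, ht⟩ : ∃ t, m + j = k + t := ⟨m + j - k, by omega⟩
          obtain ⟨s, hs⟩ : ∃ s, n = j + s := ⟨n - j, by omega⟩
          rw [show m + j - k = t from by omega, show n - j = s from by omega,
            show m + n - k = t + s from by omega]
          have hx : (X : Polynomial ℤ) ^ (t + s) * X ^ (j * t) = X ^ s * X ^ ((j + 1) * t) := by
            rw [← pow_add, ← pow_add]
            congr 1
            ring
          linear_combination qbinom m (k - j) * qbinom n j * hx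
        · rcases not_and_or.1 h1 with h2 | h2
          · rw [qbinom_eq_zero (show m < k - j from by omega)]
            ring
          · rw [qbinom_eq_zero (show n < j from by omega)]
            ring
      have hR : ∑ j ∈ Finset.range (k + 1 + 1),
            qbinom m (k + 1 - j) * qbinom (n + 1) j * X ^ (j * (m + j - (k + 1)))
          = (∑ j ∈ Finset.range (k + 1),
              (qbinom m (k - j) * qbinom n (j + 1) * X ^ ((j + 1) * (m + j - k))
                + qbinom m (k - j) * qbinom n j * (X ^ (n - j) * X ^ ((j + 1) * (m + j - k)))))
            + qbinom m (k + 1) := by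
        rw [Finset.sum_range_succ']
        congr 1
        · apply Finset.sum_congr rfl
          intro j _
          rw [show k + 1 - (j + 1) = k - j from by omega,
            show m + (j + 1) - (k + 1) = m + j - k from by omega,
            qbinom_pascal2 n j]
          ring
        · simp [qbinom_zero_right]
      rw [show m + (n + 1) = (m + n) + 1 from rfl, qbinom_pascal2 (m + n) k, hR,
        Finset.sum_add_distrib, hL1, ih m k, hL2]
      ring

lemma star (h a b : ℕ) : qbinom h a * qbinom h b
    = ∑ k ∈ Finset.range (b + 1),
        X ^ (k * (a + k - b)) * (qbinom (a + k) b * (qbinom b k * qbinom h (a + k))) := by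
  rcases lt_or_ge h b with hb | hb
  · rw [qbinom_eq_zero hb, mul_zero]
    rw [Finset.sum_eq_zero]
    intro k _
    rcases le_or_gt b (a + k) with h1 | h1
    · rw [qbinom_eq_zero (show h < a + k from by omega)]
      ring
    · rw [qbinom_eq_zero h1]
      ring
  · have hvw := vandermonde (h - b) b a
    rw [show b + (h - b) = h from by omega] at hvw
    rw [hvw, Finset.sum_mul]
    -- restrict LHS to j with a ≤ b + j
    rw [← Finset.sum_filter_add_sum_filter_not (Finset.range (a + 1)) (fun j => a ≤ b + j),
      ← Finset.sum_filter_add_sum_filter_not (Finset.range (b + 1)) (fun k => b ≤ a + k)]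
    have hz1 : ∑ j ∈ (Finset.range (a + 1)).filter (fun j => ¬ a ≤ b + j),
        qbinom b (a - j) * qbinom (h - b) j * X ^ (j * (b + j - a)) * qbinom h b = 0 := by
      apply Finset.sum_eq_zero
      intro j hj
      simp only [Finset.mem_filter, Finset.mem_range] at hj
      rw [qbinom_eq_zero (show b < a - j from by omega)]
      ring
    have hz2 : ∑ k ∈ (Finset.range (b + 1)).filter (fun k => ¬ b ≤ a + k),
        X ^ (k * (a + k - b)) * (qbinom (a + k) b * (qbinom b k * qbinom h (a + k))) = 0 := by
      apply Finset.sum_eq_zero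
      intro k hk
      simp only [Finset.mem_filter, Finset.mem_range] at hk
      rw [qbinom_eq_zero (show a + k < b from by omega)]
      ring
    rw [hz1, hz2, add_zero, add_zero]
    apply Finset.sum_nbij' (fun j => b + j - a) (fun k => a + k - b)
    · intro j hj
      simp only [Finset.mem_filter, Finset.mem_range] at hj ⊢
      omega
    · intro k hk
      simp only [Finset.mem_filter, Finset.mem_range] at hk ⊢
      omega
    · intro j hj
      simp only [Finset.mem_filter, Finset.mem_range] at hj
      omega
    · intro k hk
      simp only [Finset.mem_filter, Finset.mem_range] at hk
      omega
    · intro j hj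
      simp only [Finset.mem_filter, Finset.mem_range] at hj
      have h1 : a + (b + j - a) = b + j := by omega
      have h2 : b + j - b = j := by omega
      have h3 : qbinom b (a - j) = qbinom b (b + j - a) := by
        rw [← qbinom_symm (show a - j ≤ b from by omega), show b - (a - j) = b + j - a from by omega]
      have h4 : qbinom h (b + j) * qbinom (b + j) b = qbinom h b * qbinom (h - b) (b + j - b) := by
        exact trinomial (show b ≤ b + j from by omega)
      rw [show b + j - b = j from by omega] at h4
      rw [h1, h2, h3, show (b + j - a) * j = j * (b + j - a) from by ring]
      linear_combination (-(X:Polynomial ℤ) ^ (j * (b + j - a)) * qbinom b (b + j - a)) * h4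

lemma key_fact (B α b k : ℕ) (hk : k ≤ b) (hbk : b ≤ α + k) :
    qbinom (B + α + b + 1) (b - k) * qbinom (α + k) α * (qfact (B + α + k + 1) * (qfact α * qfact b))
    = qfact (B + α + b + 1) * (qbinom b k * qfact (α + k)) := by
  apply φq_inj
  have h1 : b - k ≤ B + α + b + 1 := by omega
  have h2 : α ≤ α + k := by omega
  rw [map_mul, map_mul, map_mul, map_mul, map_mul, map_mul,
    fact_div h1, fact_div h2, fact_div hk,
    show B + α + b + 1 - (b - k) = B + α + k + 1 from by omega,
    show α + k - α = k from by omega]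
  have n1 := φq_qfact_ne_zero (B + α + k + 1)
  have n2 := φq_qfact_ne_zero α
  have n3 := φq_qfact_ne_zero (b - k)
  have n4 := φq_qfact_ne_zero k
  field_simp

lemma main_term (B α b k h : ℕ) (hk : k ≤ b) (p : Polynomial ℤ)
    (u : FractionRing (Polynomial ℤ)) (hu : u ≠ 0) :
    φq (qfact (B + α + b + 1)) / (u * (φq (qfact α) * φq (qfact b))) *
      (φq p * φq (X ^ (k * (α + k - b)) * (qbinom (α + k) b * (qbinom b k * qbinom h (α + k)))))
    = φq (qbinom (B + α + b + 1) (b - k) * qbinom (α + k) b * qbinom (α + k) α) *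
        (φq X) ^ ((k : ℤ) * ((α : ℤ) - b + k)) *
        (φq (qfact (B + α + k + 1)) / (u * φq (qfact (α + k))) * (φq p * φq (qbinom h (α + k)))) := by
  rcases lt_or_ge (α + k) b with hab | hab
  · rw [qbinom_eq_zero hab]
    simp
  · have he : (k : ℤ) * ((α : ℤ) - b + k) = ((k * (α + k - b) : ℕ) : ℤ) := by
      push_cast [Nat.sub_add_cancel]
      rw [Nat.cast_sub hab]
      push_cast
      ring
    rw [he, zpow_natCast, ← map_pow]
    have hkey := congrArg φq (key_fact B α b k hk hab)
    simp only [map_mul] at hkey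
    have h1 : φq (qfact α) ≠ 0 := φq_qfact_ne_zero α
    have h2 : φq (qfact b) ≠ 0 := φq_qfact_ne_zero b
    have h3 : φq (qfact (α + k)) ≠ 0 := φq_qfact_ne_zero (α + k)
    simp only [map_mul]
    field_simp
    ring_nf at hkey ⊢
    linear_combination (-(φq p * φq (qbinom h (α + k)) *
      φq (qbinom (α + k) b))) * hkey

lemma prod_fin_split {M : Type*} [CommMonoid M] {m : ℕ} (f : Fin (m + 2) → M) :
    ∏ i, f i = (∏ i : Fin m, f (i.castSucc.castSucc)) * f ((Fin.last m).castSucc)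
      * f (Fin.last (m + 1)) := by
  rw [Fin.prod_univ_castSucc, Fin.prod_univ_castSucc]

lemma sum_fin_split {m : ℕ} (f : Fin (m + 2) → ℕ) :
    ∑ i, f i = (∑ i : Fin m, f (i.castSucc.castSucc)) + f ((Fin.last m).castSucc)
      + f (Fin.last (m + 1)) := by
  rw [Fin.sum_univ_castSucc, Fin.sum_univ_castSucc]

/-- for a tuple `a_1,…,a_{m'}` of length `m' = m + 2 ≥ 2`,
`S_n(a_1,…,a_{m'}) = ∑_{k=0}^{a_{m'}} [a_1+⋯+a_{m'}+1 choose a_{m'}-k]_q [a_{m'-1}+k choose a_{m'}]_q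
  [a_{m'-1}+k choose a_{m'-1}]_q q^{k(a_{m'-1}-a_{m'}+k)} S_n(a_1,…,a_{m'-2},a_{m'-1}+k)`,
where the power of `q` (with possibly negative exponent) is taken in the rational function field. -/
theorem stmt14 (n m : ℕ) (hn : 1 ≤ n) (a : Fin (m + 2) → ℕ) :
    Sq n a =
      ∑ k ∈ Finset.range (a (Fin.last (m + 1)) + 1),
        algebraMap (Polynomial ℤ) (FractionRing (Polynomial ℤ))
            (qbinom (∑ i, a i + 1) (a (Fin.last (m + 1)) - k) *
              qbinom (a ⟨m, by omega⟩ + k) (a (Fin.last (m + 1))) *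
              qbinom (a ⟨m, by omega⟩ + k) (a ⟨m, by omega⟩)) *
          algebraMap (Polynomial ℤ) (FractionRing (Polynomial ℤ)) X ^
            ((k : ℤ) * ((a ⟨m, by omega⟩ : ℤ) - a (Fin.last (m + 1)) + k)) *
          Sq n (fun i : Fin (m + 1) =>
            if i.val = m then a ⟨m, by omega⟩ + k else a i.castSucc) := by
  have hmlt : m < m + 2 := by omega
  show Sq n a =
      ∑ k ∈ Finset.range (a (Fin.last (m + 1)) + 1),
        φq (qbinom (∑ i, a i + 1) (a (Fin.last (m + 1)) - k) *
              qbinom (a ⟨m, hmlt⟩ + k) (a (Fin.last (m + 1))) *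
              qbinom (a ⟨m, hmlt⟩ + k) (a ⟨m, hmlt⟩)) *
          φq X ^ ((k : ℤ) * ((a ⟨m, hmlt⟩ : ℤ) - a (Fin.last (m + 1)) + k)) *
          Sq n (fun i : Fin (m + 1) =>
            if i.val = m then a ⟨m, hmlt⟩ + k else a i.castSucc)
  generalize hα : a ⟨m, hmlt⟩ = α
  generalize hb : a (Fin.last (m + 1)) = b
  have hcast : (Fin.last m).castSucc = (⟨m, hmlt⟩ : Fin (m + 2)) := rfl
  have hA : ∑ i, a i = (∑ i : Fin m, a (i.castSucc.castSucc)) + α + b := by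
    rw [sum_fin_split a, hcast, hα, hb]
  have hproda : ∏ i, φq (qfact (a i))
      = (∏ i : Fin m, φq (qfact (a (i.castSucc.castSucc)))) *
        (φq (qfact α) * φq (qfact b)) := by
    rw [prod_fin_split (fun i => φq (qfact (a i))), hcast, hα, hb, mul_assoc]
  have hprodb : ∀ h' : ℕ, (∏ i, qbinom h' (a i))
      = (∏ i : Fin m, qbinom h' (a (i.castSucc.castSucc))) * (qbinom h' α * qbinom h' b) := by
    intro h'
    rw [prod_fin_split (fun i => qbinom h' (a i)), hcast, hα, hb, mul_assoc]
  have hQk : ∀ k : ℕ, (∏ i : Fin (m + 1), φq (qfact (if i.val = m then α + k else a i.castSucc)))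
      = (∏ i : Fin m, φq (qfact (a (i.castSucc.castSucc)))) * φq (qfact (α + k)) := by
    intro k
    rw [Fin.prod_univ_castSucc]
    congr 1
    · refine Finset.prod_congr rfl fun i _ => ?_
      have hne : (Fin.castSucc i).val ≠ m := by
        have := i.isLt
        simp only [Fin.coe_castSucc]
        omega
      rw [if_neg hne]
    · rw [if_pos (Fin.val_last m)]
  have hPk : ∀ (k h' : ℕ), (∏ i : Fin (m + 1), qbinom h' (if i.val = m then α + k else a i.castSucc))
      = (∏ i : Fin m, qbinom h' (a (i.castSucc.castSucc))) * qbinom h' (α + k) := by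
    intro k h'
    rw [Fin.prod_univ_castSucc]
    congr 1
    · refine Finset.prod_congr rfl fun i _ => ?_
      have hne : (Fin.castSucc i).val ≠ m := by
        have := i.isLt
        simp only [Fin.coe_castSucc]
        omega
      rw [if_neg hne]
    · rw [if_pos (Fin.val_last m)]
  have hSk : ∀ k : ℕ, (∑ i : Fin (m + 1), if i.val = m then α + k else a i.castSucc)
      = (∑ i : Fin m, a (i.castSucc.castSucc)) + α + k := by
    intro k
    rw [Fin.sum_univ_castSucc]
    have h1 : (∑ i : Fin m, if (Fin.castSucc i).val = m then α + k else a (Fin.castSucc i).castSucc)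
        = ∑ i : Fin m, a (i.castSucc.castSucc) := by
      refine Finset.sum_congr rfl fun i _ => ?_
      have hne : (Fin.castSucc i).val ≠ m := by
        have := i.isLt
        simp only [Fin.coe_castSucc]
        omega
      rw [if_neg hne]
    rw [h1, if_pos (Fin.val_last m)]
    omega
  have hN : φq (qint n) ≠ 0 := φq_ne_zero (qint_ne_zero hn)
  have hQ0 : (∏ i : Fin m, φq (qfact (a (i.castSucc.castSucc)))) ≠ 0 :=
    Finset.prod_ne_zero_iff.2 fun i _ => φq_qfact_ne_zero _
  simp only [Sq, hA, hproda, hprodb, hQk, hPk, hSk]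
  simp only [Finset.mul_sum]
  rw [Finset.sum_comm]
  refine Finset.sum_congr rfl fun h _ => ?_
  have hsplit : ∀ w : Polynomial ℤ,
      X ^ h * ((∏ i : Fin m, qbinom h (a (i.castSucc.castSucc))) * w)
      = (X ^ h * ∏ i : Fin m, qbinom h (a (i.castSucc.castSucc))) * w := fun w => by ring
  rw [hsplit, map_mul, star h α b]
  rw [map_sum]
  simp only [Finset.mul_sum]
  refine Finset.sum_congr rfl fun k hk => ?_
  have hk' : k ≤ b := by
    have := Finset.mem_range.1 hk
    omega
  rw [hsplit, map_mul]
  have hd1 : φq (qint n) * ((∏ i : Fin m, φq (qfact (a (i.castSucc.castSucc)))) *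
      (φq (qfact α) * φq (qfact b)))
      = (φq (qint n) * ∏ i : Fin m, φq (qfact (a (i.castSucc.castSucc)))) *
        (φq (qfact α) * φq (qfact b)) := by ring
  have hd2 : φq (qint n) * ((∏ i : Fin m, φq (qfact (a (i.castSucc.castSucc)))) *
      φq (qfact (α + k)))
      = (φq (qint n) * ∏ i : Fin m, φq (qfact (a (i.castSucc.castSucc)))) *
        φq (qfact (α + k)) := by ring
  rw [hd1, hd2]
  have H := main_term (∑ i : Fin m, a (i.castSucc.castSucc)) α b k h hk'
    (X ^ h * ∏ i : Fin m, qbinom h (a (i.castSucc.castSucc)))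
    (φq (qint n) * ∏ i : Fin m, φq (qfact (a (i.castSucc.castSucc))))
    (mul_ne_zero hN hQ0)
  simp only [map_mul] at H ⊢
  linear_combination H
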